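/- Let n, k, N, m ≥ 1, let X = {x_1,…,x_n}, Z = {z_1,…,z_m}, and Y = {y_1,…,y_N}. Consider the polynomial P = ∏_{i=1}^n ∏_{j=1}^m (x_i + z_j) · Δ(X)^{2k}, viewed as a polynomial in x_1,…,x_n with coefficients in ℤ[z_1,…,z_m]. Applying to P the linear map sending each monomial x_1^{d_1}⋯x_n^{d_n} to ∏_{i=1}^n Λ^{d_i − m}(Y) (coefficients in the z's carried along multiplicatively) yields ∑_{(σ_1,…,σ_{2k}) ∈ (S_n)^{2k}} sign(σ_1)⋯sign(σ_{2k}) · ∏_{i=1}^n Λ^{(σ_1(i)−1)+⋯+(σ_{2k}(i)−1)}(Y ∪ Z), where Λ^p(Y ∪ Z) is the p-th elementary symmetric polynomial in the N+m variables y_1,…,y_N,z_1,…,z_m. That is, (1/n!)∫_Y ( ∏_i x_i^{−m} ∏_{i,j}(x_i+z_j) Δ(X)^{2k} ) = H^k_n(Y+Z). -/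

import Mathlib

/-- The scaled hyperdeterminant `DET` of a `k`-th order hypermatrix. -/
noncomputable def DET {R : Type*} [CommRing R] (n k : ℕ)
    (M : (Fin k → Fin n) → R) : R :=
  ∑ σ : Fin k → Equiv.Perm (Fin n),
    (∏ s, (Equiv.Perm.sign (σ s) : ℤ)) • ∏ i, M (fun s => σ s i)

/-- The `p`-th elementary symmetric polynomial of the alphabet `Y` (the first
`N` of the `N + m` variables), vanishing for `p < 0` and `p > N`. -/
noncomputable def ΛY (N m : ℕ) (p : ℤ) : MvPolynomial (Fin (N + m)) ℤ :=
  if 0 ≤ p then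
    MvPolynomial.rename (Fin.castAdd m) (MvPolynomial.esymm (Fin N) ℤ p.toNat)
  else 0

/-- The `p`-th elementary symmetric polynomial of the full alphabet `Y ∪ Z`
of `N + m` variables, vanishing for `p < 0` and `p > N + m`. -/
noncomputable def ΛYZ (N m : ℕ) (p : ℤ) : MvPolynomial (Fin (N + m)) ℤ :=
  if 0 ≤ p then MvPolynomial.esymm (Fin (N + m)) ℤ p.toNat else 0

/-- The Vandermonde polynomial `Δ(X)` in `x_1, …, x_n` with coefficients in
`ℤ[z_1,…,z_m]`. -/
noncomputable def vandermondeZ (n m : ℕ) :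
    MvPolynomial (Fin n) (MvPolynomial (Fin m) ℤ) :=
  ∏ p ∈ Finset.univ.filter (fun p : Fin n × Fin n => p.1 < p.2),
    (MvPolynomial.X p.1 - MvPolynomial.X p.2)

/-!
Expand `Δ(X)^{2k}` as the `2k`-th power of the Vandermonde determinant: this gives
`∑_σ ±∏_i x_i^{∑_s σ_s(i)}`, and on a product of one-variable factors the map factorises over
the variables. For one variable, `x^a ∏_j (x + z_j) = ∑_c e_c(Z) x^{a+m-c}` is sent to
`∑_c e_c(Z) Λ^{a-c}(Y) = Λ^a(Y ∪ Z)`, the convolution identity for elementary symmetric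
functions of a disjoint union, read off from the generating function `∏_w (1 + w t)`.
-/

open Finset MvPolynomial

theorem Finset.coeff_prod_one_add_C_mul_X {ι R : Type*} [CommSemiring R] (s : Finset ι)
    (r : ι → R) (k : ℕ) :
    (∏ i ∈ s, (1 + Polynomial.C (r i) * Polynomial.X)).coeff k
      = ∑ t ∈ s.powersetCard k, ∏ i ∈ t, r i := by
  classical
  simp_rw [prod_one_add, prod_mul_distrib, prod_const, ← map_prod, Polynomial.finsetSum_coeff,
    Polynomial.coeff_C_mul_X_pow, sum_ite, sum_const_zero, add_zero, powersetCard_eq_filter,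
    eq_comm]

theorem MvPolynomial.rename_esymm_eq_coeff_prod {σ τ R : Type*} [CommSemiring R] [Fintype σ]
    (f : σ → τ) (k : ℕ) :
    rename f (esymm σ R k) = (∏ i, (1 + Polynomial.C (X (f i)) * Polynomial.X)).coeff k := by
  rw [Finset.coeff_prod_one_add_C_mul_X, esymm, map_sum]
  simp_rw [map_prod, rename_X]

theorem MvPolynomial.esymm_fin_add (R : Type*) [CommSemiring R] (N m k : ℕ) :
    esymm (Fin (N + m)) R k = ∑ p ∈ antidiagonal k,
      rename (Fin.castAdd m) (esymm (Fin N) R p.1) *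
        rename (Fin.natAdd N) (esymm (Fin m) R p.2) := by
  rw [← rename_id_apply (esymm (Fin (N + m)) R k), rename_esymm_eq_coeff_prod,
    Fin.prod_univ_add, Polynomial.coeff_mul]
  simp_rw [rename_esymm_eq_coeff_prod]
  rfl

theorem MvPolynomial.esymm_eq_zero_of_card_lt {σ R : Type*} [CommSemiring R] [Fintype σ] {k : ℕ}
    (h : Fintype.card σ < k) : esymm σ R k = 0 := by
  rw [esymm, powersetCard_eq_empty.2 (by simpa using h), sum_empty]

theorem ΛY_natCast_sub (N m a c : ℕ) :
    ΛY N m ((a : ℤ) - c) =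
      if c ≤ a then rename (Fin.castAdd m) (esymm (Fin N) ℤ (a - c)) else 0 := by
  unfold ΛY
  split_ifs <;> first | rfl | omega | rw [show (a - c : ℤ).toNat = a - c by omega]

theorem sum_rename_esymm_mul_ΛY (N m a : ℕ) :
    ∑ c ∈ range (m + 1), rename (Fin.natAdd N) (esymm (Fin m) ℤ c) * ΛY N m ((a : ℤ) - c)
      = ΛYZ N m a := by
  set g : ℕ → MvPolynomial (Fin (N + m)) ℤ :=
    fun c => rename (Fin.natAdd N) (esymm (Fin m) ℤ c) * ΛY N m ((a : ℤ) - c)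
  have hZ : ∀ c, m < c → g c = 0 := fun c hc => by
    dsimp only [g]
    rw [esymm_eq_zero_of_card_lt (by simpa using hc), map_zero, zero_mul]
  have hY : ∀ c, a < c → g c = 0 := fun c hc => by
    simp only [g, ΛY_natCast_sub, if_neg (not_le.2 hc), mul_zero]
  calc ∑ c ∈ range (m + 1), g c = ∑ c ∈ range (a + m + 1), g c :=
        sum_subset (range_subset_range.2 (by omega)) fun c _ hc => hZ c (by simpa using hc)
    _ = ∑ c ∈ range (a + 1), g c :=
        (sum_subset (range_subset_range.2 (by omega)) fun c _ hc => hY c (by simpa using hc)).symm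
    _ = ΛYZ N m a := by
      rw [ΛYZ, if_pos (Int.natCast_nonneg a), Int.toNat_natCast, esymm_fin_add,
        ← Nat.sum_antidiagonal_swap, Nat.sum_antidiagonal_eq_sum_range_succ_mk]
      refine sum_congr rfl fun c hc => ?_
      simp only [g, Prod.swap]
      rw [ΛY_natCast_sub, if_pos (by simpa [Nat.lt_succ_iff] using hc), mul_comm]

/-- The paper's `P ↦ ∫_Y ∏_i x_i^{-m} P`: the term `c x^d` goes to `c ∏_i Λ^{d_i - m}(Y)`, with
`c ∈ ℤ[Z]` placed on the last `m` of the `N + m` variables. -/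
noncomputable def intY (n N m : ℕ) :
    MvPolynomial (Fin n) (MvPolynomial (Fin m) ℤ) →+ MvPolynomial (Fin (N + m)) ℤ :=
  AddMonoidAlgebra.liftNC (rename (Fin.natAdd N)).toAddMonoidHom
    fun d => ∏ i, ΛY N m ((d.toAdd i : ℤ) - m)

theorem intY_monomial (n N m : ℕ) (d : Fin n →₀ ℕ) (c : MvPolynomial (Fin m) ℤ) :
    intY n N m (monomial d c) = rename (Fin.natAdd N) c * ∏ i, ΛY N m ((d i : ℤ) - m) :=
  AddMonoidAlgebra.liftNC_single _ _ _ _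

theorem intY_prod_C_mul_X_pow (n N m : ℕ) (c : Fin n → MvPolynomial (Fin m) ℤ) (e : Fin n → ℕ) :
    intY n N m (∏ i, C (c i) * X i ^ e i)
      = ∏ i, rename (Fin.natAdd N) (c i) * ΛY N m ((e i : ℤ) - m) := by
  simp_rw [C_mul_X_pow_eq_monomial, ← monomial_sum_prod, intY_monomial, map_prod,
    ← prod_mul_distrib, Finsupp.finsetSum_apply, Finsupp.single_apply, sum_ite_eq',
    if_pos (mem_univ _)]

theorem intY_prod_sum {ι : Type*} (n N m : ℕ) (s : Finset ι)
    (c : Fin n → ι → MvPolynomial (Fin m) ℤ) (e : Fin n → ι → ℕ) :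
    intY n N m (∏ i, ∑ j ∈ s, C (c i j) * X i ^ e i j)
      = ∏ i, ∑ j ∈ s, rename (Fin.natAdd N) (c i j) * ΛY N m ((e i j : ℤ) - m) := by
  simp_rw [prod_univ_sum, map_sum, intY_prod_C_mul_X_pow]

theorem MvPolynomial.prod_X_add_C_X_mul_X_pow {σ τ R : Type*} [CommSemiring R] [Fintype τ]
    (i : σ) (a : ℕ) :
    (∏ j : τ, (X i + C (X j)) : MvPolynomial σ (MvPolynomial τ R)) * X i ^ a
      = ∑ c ∈ range (Fintype.card τ + 1),
          C (esymm τ R c) * X i ^ (a + (Fintype.card τ - c)) := by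
  have h := congrArg (Polynomial.aeval (X i : MvPolynomial σ (MvPolynomial τ R)))
    (prod_C_add_X_eq_sum_esymm R τ)
  simp only [map_prod, map_sum, map_mul, map_add, map_pow, Polynomial.aeval_X,
    Polynomial.aeval_C, algebraMap_eq] at h
  rw [h, sum_mul]
  simp_rw [pow_add, mul_assoc, mul_comm (X i ^ a)]

theorem intY_prod_prod_X_add_C_mul_X_pow (n N m : ℕ) (a : Fin n → ℕ) :
    intY n N m (∏ i, (∏ j : Fin m, (X i + C (X j))) * X i ^ a i) = ∏ i, ΛYZ N m (a i) := by
  simp_rw [prod_X_add_C_X_mul_X_pow, Fintype.card_fin, intY_prod_sum]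
  refine prod_congr rfl fun i _ => ?_
  rw [← sum_rename_esymm_mul_ΛY]
  refine sum_congr rfl fun c hc => ?_
  congr 2
  push_cast [Nat.cast_sub (mem_range_succ_iff.1 hc)]
  ring

theorem Matrix.det_vandermonde_pow {R : Type*} [CommRing R] {n : ℕ} (v : Fin n → R) (K : ℕ) :
    (Matrix.vandermonde v).det ^ K
      = ∑ σ : Fin K → Equiv.Perm (Fin n),
          (∏ s, (Equiv.Perm.sign (σ s) : ℤ)) • ∏ i, v i ^ ∑ s, (σ s i : ℕ) := by
  rw [← Matrix.det_transpose, Matrix.det_apply, ← Fin.prod_const, Fintype.prod_sum]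
  refine sum_congr rfl fun σ _ => ?_
  simp_rw [Matrix.transpose_apply, Matrix.vandermonde_apply, Units.smul_def, zsmul_eq_mul,
    Int.cast_prod, prod_mul_distrib, ← prod_pow_eq_pow_sum]
  rw [prod_comm (s := univ) (t := univ)]

theorem vandermondeZ_sq (n m : ℕ) :
    vandermondeZ n m ^ 2
      = (Matrix.vandermonde fun i =>
          (X i : MvPolynomial (Fin n) (MvPolynomial (Fin m) ℤ))).det ^ 2 := by
  rw [Matrix.det_vandermonde, vandermondeZ,
    prod_finset_product _ univ (fun i => Ioi i) (by simp), ← prod_pow, ← prod_pow]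
  simp_rw [← prod_pow, sub_sq_comm]

theorem intY_sum_alphabet_general (n k N m : ℕ) :
    (∑ d ∈ ((∏ i : Fin n, ∏ j : Fin m,
          (MvPolynomial.X i + MvPolynomial.C (MvPolynomial.X j))) *
            vandermondeZ n m ^ (2 * k)).support,
        MvPolynomial.rename (Fin.natAdd N)
          (MvPolynomial.coeff d ((∏ i : Fin n, ∏ j : Fin m,
            (MvPolynomial.X i + MvPolynomial.C (MvPolynomial.X j))) *
              vandermondeZ n m ^ (2 * k))) *
          ∏ i, ΛY N m ((d i : ℤ) - (m : ℤ)))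
      = DET n (2 * k) (fun i => ΛYZ N m (∑ s, ((i s : ℕ) : ℤ))) := by
  change intY n N m _ = _
  rw [pow_mul, vandermondeZ_sq, ← pow_mul, Matrix.det_vandermonde_pow, mul_sum, map_sum, DET]
  refine sum_congr rfl fun σ _ => ?_
  rw [mul_smul_comm, map_zsmul, ← prod_mul_distrib, intY_prod_prod_X_add_C_mul_X_pow]
  simp only [Nat.cast_sum]

/-- Applying to `P = ∏_{i,j} (x_i + z_j) ⋅ Δ(X)^{2k}` the substitution sending
each monomial `x_1^{d_1} ⋯ x_n^{d_n}` to `∏_i Λ^{d_i−m}(Y)` (coefficients in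
the `z`'s carried along) yields the Hankel hyperdeterminant of the union
alphabet: `(1/n!) ∫_Y ∏_i x_i^{−m} ∏_{i,j}(x_i+z_j) Δ(X)^{2k} = H^k_n(Y+Z)`. -/
theorem intY_sum_alphabet (n k N m : ℕ)
    (hn : 1 ≤ n) (hk : 1 ≤ k) (hN : 1 ≤ N) (hm : 1 ≤ m) :
    (∑ d ∈ ((∏ i : Fin n, ∏ j : Fin m,
          (MvPolynomial.X i + MvPolynomial.C (MvPolynomial.X j))) *
            vandermondeZ n m ^ (2 * k)).support,
        MvPolynomial.rename (Fin.natAdd N)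
          (MvPolynomial.coeff d ((∏ i : Fin n, ∏ j : Fin m,
            (MvPolynomial.X i + MvPolynomial.C (MvPolynomial.X j))) *
              vandermondeZ n m ^ (2 * k))) *
          ∏ i, ΛY N m ((d i : ℤ) - (m : ℤ)))
      = DET n (2 * k) (fun i => ΛYZ N m (∑ s, ((i s : ℕ) : ℤ))) :=
  intY_sum_alphabet_general n k N m
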